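/- Let η ∈ H²(S¹;ℝ^d) be a constant-speed closed curve (|∂_s η| ≡ L) and let σ : S¹ → ℝ be H² with L² ∂_{ss}σ − |∂_{ss}η|² σ = −|∂_{ss}η|² + c where c = ∫₀¹ (1−σ)|∂_{ss}η|² ds and ∫₀¹ σ ds = 0. Set σ̃ := 1 − σ. Then ∫₀¹ σ̃ |∂_{ss}η|² ds ≥ 0, with equality if and only if σ̃ ≡ 0 on S¹; since ∫₀¹ σ̃ ds = 1, in fact the strict inequality ∫₀¹ σ̃ |∂_{ss}η|² ds > 0 holds. -/

import Mathlib

/-!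
Multiplying the equation by `σ̃ = 1 - σ` and integrating by parts over a period, using
`∫ σ̃ = 1`, gives `c = L² ∫ (σ')² + ∫ |∂ₛₛη|² σ̃²`, so `c ≥ 0`. If `c = 0`, then `σ' ≡ 0`, so
`σ ≡ 0` by the mean-zero condition, and then `∂ₛₛη ≡ 0`; but a closed curve with constant
velocity has zero velocity, contradicting `|∂ₛη| = L > 0`. Finally `σ̃ ≡ 0` is incompatible
with `∫ σ̃ = 1`.
-/

open MeasureTheory intervalIntegral Set

section Calculus

variable {E : Type*} [NormedAddCommGroup E] [NormedSpace ℝ E] {a b : ℝ}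

theorem Function.Periodic.deriv {f : ℝ → E} {p : ℝ} (h : Function.Periodic f p) :
    Function.Periodic (deriv f) p := fun x => by
  rw [← deriv_comp_add_const, funext h]

theorem eqOn_zero_of_integral_eq_zero {f : ℝ → ℝ} (hab : a < b) (hf : ContinuousOn f (Icc a b))
    (h0 : ∀ x ∈ Icc a b, 0 ≤ f x) (hint : ∫ x in a..b, f x = 0) : EqOn f 0 (Icc a b) := by
  have hae : f =ᵐ[volume.restrict (Ioc a b)] 0 :=
    (integral_eq_zero_iff_of_le_of_nonneg_ae hab.le
      ((ae_restrict_iff' measurableSet_Ioc).2 (.of_forall fun x hx => h0 x (Ioc_subset_Icc_self hx)))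
      (hf.intervalIntegrable_of_Icc hab.le)).1 hint
  rw [Measure.restrict_congr_set Ioc_ae_eq_Icc] at hae
  exact Measure.eqOn_Icc_of_ae_eq volume hab.ne hae hf continuousOn_const

theorem eqOn_const_of_deriv_eqOn_zero {f : ℝ → E} (hf : Differentiable ℝ f)
    (h : EqOn (deriv f) 0 (Icc a b)) : EqOn f (fun _ => f a) (Icc a b) :=
  constant_of_has_deriv_right_zero hf.continuous.continuousOn fun x hx =>
    (h (Ico_subset_Icc_self hx) ▸ (hf x).hasDerivAt).hasDerivWithinAt

theorem deriv_eq_zero_of_deriv_deriv_eqOn_zero [CompleteSpace E] {f : ℝ → E}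
    (hf : ContDiff ℝ 2 f) (hab : a < b) (hfab : f b = f a)
    (h : EqOn (deriv (deriv f)) 0 (Icc a b)) : deriv f a = 0 := by
  have hf' : ContDiff ℝ 1 (deriv f) := hf.deriv'
  have hconst := eqOn_const_of_deriv_eqOn_zero (hf'.differentiable one_ne_zero) h
  have hint : ∫ x in a..b, deriv f x = (b - a) • deriv f a := by
    rw [integral_congr (g := fun _ => deriv f a) (uIcc_of_le hab.le ▸ hconst),
      intervalIntegral.integral_const]
  rw [integral_deriv_eq_sub (fun x _ => (hf.differentiable (by norm_num) x))
    (hf'.continuous.intervalIntegrable a b), hfab, sub_self] at hint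
  exact (smul_eq_zero.1 hint.symm).resolve_left (sub_ne_zero.2 hab.ne')

end Calculus

section Multiplier

variable {σ k : ℝ → ℝ} {a b L c : ℝ}

theorem integral_deriv_deriv_mul_one_sub (hσ : ContDiff ℝ 2 σ) (hb : σ b = σ a)
    (hb' : deriv σ b = deriv σ a) :
    ∫ x in a..b, deriv (deriv σ) x * (1 - σ x) = ∫ x in a..b, deriv σ x ^ 2 := by
  have hσ' : ContDiff ℝ 1 (deriv σ) := hσ.deriv'
  have hparts := integral_mul_deriv_eq_deriv_mul (v := fun x => 1 - σ x)
    (fun x _ => (hσ'.differentiable one_ne_zero x).hasDerivAt)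
    (fun x _ => (hσ.differentiable (by norm_num) x).hasDerivAt.const_sub 1)
    ((hσ'.continuous_deriv le_rfl).intervalIntegrable a b)
    (hσ'.continuous.neg.intervalIntegrable a b)
  simp only [hb, hb', sub_self, zero_sub, mul_neg, intervalIntegral.integral_neg, ← sq] at hparts
  linarith

theorem const_eq_energy_of_ode (hσ : ContDiff ℝ 2 σ) (hk : Continuous k) (hper : σ 1 = σ 0)
    (hper' : deriv σ 1 = deriv σ 0)
    (hode : ∀ s, L ^ 2 * deriv (deriv σ) s - k s * σ s = -k s + c)
    (hmean : ∫ s in (0:ℝ)..1, σ s = 0) :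
    c = L ^ 2 * (∫ s in (0:ℝ)..1, deriv σ s ^ 2) + ∫ s in (0:ℝ)..1, k s * (1 - σ s) ^ 2 := by
  have hσc : Continuous σ := hσ.continuous
  have hpt : ∀ s, L ^ 2 * (deriv (deriv σ) s * (1 - σ s))
      = c * (1 - σ s) - k s * (1 - σ s) ^ 2 := fun s => by
    linear_combination (1 - σ s) * hode s
  have hmean' : ∫ s in (0:ℝ)..1, (1 - σ s) = 1 := by
    rw [integral_sub intervalIntegrable_const (hσc.intervalIntegrable 0 1), hmean]
    simp
  have hint := congrArg (fun f : ℝ → ℝ => ∫ s in (0:ℝ)..1, f s) (funext hpt)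
  simp only [intervalIntegral.integral_const_mul] at hint
  rw [integral_deriv_deriv_mul_one_sub hσ hper hper',
    integral_sub ((by fun_prop : Continuous fun s => c * (1 - σ s)).intervalIntegrable 0 1)
      ((by fun_prop : Continuous fun s => k s * (1 - σ s) ^ 2).intervalIntegrable 0 1),
    intervalIntegral.integral_const_mul, hmean'] at hint
  linarith

theorem eqOn_zero_of_integral_eq_zero_of_integral_deriv_sq_eq_zero (hσ : ContDiff ℝ 1 σ)
    (hab : a < b) (hmean : ∫ s in a..b, σ s = 0) (h : ∫ s in a..b, deriv σ s ^ 2 = 0) :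
    EqOn σ 0 (Icc a b) := by
  have hσ' : EqOn (deriv σ) 0 (Icc a b) := fun x hx =>
    pow_eq_zero_iff two_ne_zero |>.1 <| eqOn_zero_of_integral_eq_zero hab
      ((hσ.continuous_deriv le_rfl).pow 2).continuousOn (fun _ _ => sq_nonneg _) h hx
  have hconst := eqOn_const_of_deriv_eqOn_zero (hσ.differentiable one_ne_zero) hσ'
  rw [integral_congr (g := fun _ => σ a) (uIcc_of_le hab.le ▸ hconst),
    intervalIntegral.integral_const, smul_eq_mul] at hmean
  have hσa : σ a = 0 := (mul_eq_zero.1 hmean).resolve_left (sub_ne_zero.2 hab.ne')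
  exact fun x hx => (hconst hx).trans hσa

theorem const_pos_of_ode {F : Type*} [NormedAddCommGroup F] [NormedSpace ℝ F] [CompleteSpace F]
    {η : ℝ → F} (hη : ContDiff ℝ 2 η) (hσ : ContDiff ℝ 2 σ) (hη1 : η 1 = η 0)
    (hσ1 : σ 1 = σ 0) (hσ'1 : deriv σ 1 = deriv σ 0) (hL : 0 < L) (hspeed : ‖deriv η 0‖ = L)
    (hode : ∀ s, L ^ 2 * deriv (deriv σ) s - ‖deriv (deriv η) s‖ ^ 2 * σ s
        = -‖deriv (deriv η) s‖ ^ 2 + c)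
    (hmean : ∫ s in (0:ℝ)..1, σ s = 0) : 0 < c := by
  have hk : Continuous fun s => ‖deriv (deriv η) s‖ ^ 2 :=
    (hη.deriv'.continuous_deriv le_rfl).norm.pow 2
  have henergy := const_eq_energy_of_ode hσ hk hσ1 hσ'1 hode hmean
  have hσ'_nonneg : 0 ≤ L ^ 2 * ∫ s in (0:ℝ)..1, deriv σ s ^ 2 :=
    mul_nonneg (sq_nonneg L) (integral_nonneg zero_le_one fun _ _ => sq_nonneg _)
  have hk_nonneg : 0 ≤ ∫ s in (0:ℝ)..1, ‖deriv (deriv η) s‖ ^ 2 * (1 - σ s) ^ 2 :=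
    integral_nonneg zero_le_one fun _ _ => by positivity
  refine (henergy ▸ add_nonneg hσ'_nonneg hk_nonneg : 0 ≤ c).lt_of_ne fun hc0 => ?_
  obtain ⟨hσ'0, hk0⟩ := (add_eq_zero_iff_of_nonneg hσ'_nonneg hk_nonneg).1 (henergy ▸ hc0.symm)
  have hσ0 := eqOn_zero_of_integral_eq_zero_of_integral_deriv_sq_eq_zero hσ.of_succ one_pos
    hmean ((mul_eq_zero.1 hσ'0).resolve_left (by positivity))
  have hη'' : EqOn (deriv (deriv η)) 0 (Icc 0 1) := fun x hx => by
    refine norm_eq_zero.1 <| pow_eq_zero_iff two_ne_zero |>.1 <|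
      eqOn_zero_of_integral_eq_zero one_pos hk.continuousOn (fun _ _ => by positivity) ?_ hx
    refine (integral_congr fun s hs => ?_).trans hk0
    simp [hσ0 (uIcc_of_le (zero_le_one (α := ℝ)) ▸ hs)]
  rw [deriv_eq_zero_of_deriv_deriv_eqOn_zero hη one_pos hη1 hη'', norm_zero] at hspeed
  exact hL.ne hspeed

end Multiplier

theorem stmt2 (d : ℕ)
    (η : ℝ → EuclideanSpace ℝ (Fin d)) (σ : ℝ → ℝ) (L c : ℝ)
    (hη : ContDiff ℝ 2 η) (hσ : ContDiff ℝ 2 σ)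
    (hperη : Function.Periodic η 1) (hperσ : Function.Periodic σ 1)
    (hLpos : 0 < L) (hspeed : ∀ s, ‖deriv η s‖ = L)
    (hode : ∀ s, L ^ 2 * deriv (deriv σ) s - ‖deriv (deriv η) s‖ ^ 2 * σ s
        = -‖deriv (deriv η) s‖ ^ 2 + c)
    (hc : c = ∫ s in (0:ℝ)..1, (1 - σ s) * ‖deriv (deriv η) s‖ ^ 2)
    (hσmean : (∫ s in (0:ℝ)..1, σ s) = 0) :
    (0 ≤ ∫ s in (0:ℝ)..1, (1 - σ s) * ‖deriv (deriv η) s‖ ^ 2) ∧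
    ((∫ s in (0:ℝ)..1, (1 - σ s) * ‖deriv (deriv η) s‖ ^ 2) = 0 ↔ ∀ s, 1 - σ s = 0) ∧
    (0 < ∫ s in (0:ℝ)..1, (1 - σ s) * ‖deriv (deriv η) s‖ ^ 2) := by
  have hcpos : 0 < c := const_pos_of_ode hη hσ (by simpa using hperη 0) (by simpa using hperσ 0)
    (by simpa using hperσ.deriv 0) hLpos (hspeed 0) hode hσmean
  rw [← hc]
  refine ⟨hcpos.le, iff_of_false hcpos.ne' fun hσ1 => ?_, hcpos⟩
  rw [integral_congr (g := fun _ => 1) fun s _ => by linarith [hσ1 s]] at hσmean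
  simp at hσmean
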